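/- arXiv:2502.02353 — 2 statements merged into one kernel-verified Lean document; each statement's English description precedes it below -/
import Mathlib

section
/- Let Q be a quiver and for each dimension vector d define the polynomial n_d(x) by the recursion n_0 = 1 and n_d(x) = -∑_{e ⪇ d} (-1)^{dim d - dim e} x^{∑_i (C(d_i,2) - C(e_i,2)) - ⟨e, d-e⟩} [d choose e]_x · n_e(x) for d ≠ 0, where ⟨·,·⟩ is the Euler form of Q, dim d = ∑_i d_i, and [d choose e]_x = ∏_i [d_i choose e_i]_x. Then each n_d(x) is a polynomial with integer coefficients (i.e., lies in Z[x], with no negative powers of x appearing). -/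
/-- The q-Pochhammer symbol. -/
noncomputable def qPoch {K : Type*} [Field K] (q : K) (n : ℕ) : K :=
  ∏ i ∈ Finset.range n, (1 - q ^ (i + 1))

/-- Gaussian binomial coefficient. -/
noncomputable def gbinom {K : Type*} [Field K] (q : K) (n k : ℕ) : K :=
  qPoch q n / (qPoch q k * qPoch q (n - k))

/-- Euler form of the quiver with vertex set `V` and `r i j` arrows from `i` to `j`. -/
def eulerForm (V : Type*) [Fintype V] (r : V → V → ℕ) (d e : V → ℕ) : ℤ :=
  ∑ i, (d i : ℤ) * (e i : ℤ) - ∑ i, ∑ j, (r i j : ℤ) * (d i : ℤ) * (e j : ℤ)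

/-!
Every `e` occurring in the recursion for `n d` is strictly below `d`, so by well-founded
induction it suffices that all other factors are integer polynomials in `x`. The Gaussian
binomials are, by the `q`-Pascal rule, and the exponent of `x` is a natural number:
`C(d_i,2) - C(e_i,2) = C(d_i - e_i, 2) + e_i (d_i - e_i)` cancels the diagonal part of the
Euler form, leaving `∑ C(d_i - e_i, 2) + ∑_{i → j} e_i (d_j - e_j) ≥ 0`.
-/

section QBinomial

variable {K : Type*} [Field K] (q : K)

lemma qPoch_zero : qPoch q 0 = 1 := by
  simp [qPoch]

lemma qPoch_succ (m : ℕ) : qPoch q (m + 1) = qPoch q m * (1 - q ^ (m + 1)) :=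
  Finset.prod_range_succ _ _

variable {q}

lemma qPoch_ne_zero (hq : ∀ m : ℕ, q ^ (m + 1) ≠ 1) (m : ℕ) : qPoch q m ≠ 0 := by
  induction m with
  | zero => simp [qPoch_zero]
  | succ m ih => exact qPoch_succ q m ▸ mul_ne_zero ih (sub_ne_zero.2 (hq m).symm)

lemma gbinom_zero_right (hq : ∀ m : ℕ, q ^ (m + 1) ≠ 1) (n : ℕ) : gbinom q n 0 = 1 := by
  rw [gbinom, qPoch_zero, Nat.sub_zero, one_mul, div_self (qPoch_ne_zero hq n)]

lemma gbinom_self (hq : ∀ m : ℕ, q ^ (m + 1) ≠ 1) (n : ℕ) : gbinom q n n = 1 := by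
  rw [gbinom, Nat.sub_self, qPoch_zero, mul_one, div_self (qPoch_ne_zero hq n)]

lemma gbinom_succ_succ (hq : ∀ m : ℕ, q ^ (m + 1) ≠ 1) (k a : ℕ) :
    gbinom q (k + a + 2) (k + 1) =
      gbinom q (k + a + 1) k + q ^ (k + 1) * gbinom q (k + a + 1) (k + 1) := by
  rw [gbinom, gbinom, gbinom, show k + a + 2 - (k + 1) = a + 1 by omega,
    show k + a + 1 - k = a + 1 by omega, show k + a + 1 - (k + 1) = a by omega,
    qPoch_succ q (k + a + 1), qPoch_succ q k, qPoch_succ q a]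
  have := qPoch_ne_zero hq k
  have := qPoch_ne_zero hq a
  have := sub_ne_zero.2 (hq k).symm
  have := sub_ne_zero.2 (hq a).symm
  field_simp
  ring

lemma gbinom_mem (hq : ∀ m : ℕ, q ^ (m + 1) ≠ 1) {S : Subring K} (hqS : q ∈ S)
    {n k : ℕ} (hkn : k ≤ n) : gbinom q n k ∈ S := by
  induction n generalizing k with
  | zero => simp [Nat.le_zero.1 hkn, gbinom_zero_right hq]
  | succ n ih =>
    rcases k with _ | k
    · simp [gbinom_zero_right hq]
    obtain rfl | ⟨a, rfl⟩ : k = n ∨ ∃ a, n = k + a + 1 :=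
      (Nat.eq_or_lt_of_le (Nat.le_of_succ_le_succ hkn)).imp_right fun h => ⟨n - k - 1, by omega⟩
    · simp [gbinom_self hq]
    rw [gbinom_succ_succ hq]
    exact add_mem (ih (by omega)) (mul_mem (pow_mem hqS _) (ih (by omega)))

end QBinomial

lemma RatFunc.X_pow_succ_ne_one (K : Type*) [Field K] (m : ℕ) :
    (RatFunc.X : RatFunc K) ^ (m + 1) ≠ 1 := by
  rw [← RatFunc.algebraMap_X, ← map_pow, ← map_one (algebraMap (Polynomial K) (RatFunc K)),
    (RatFunc.algebraMap_injective K).ne_iff]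
  intro h
  simpa using congrArg Polynomial.natDegree h

lemma Nat.add_choose_two (a b : ℕ) : (a + b).choose 2 = a.choose 2 + b.choose 2 + a * b := by
  rw [Nat.add_choose_eq, Finset.Nat.sum_antidiagonal_eq_sum_range_succ_mk, Finset.sum_range_succ,
    Finset.sum_range_succ, Finset.sum_range_one]
  simp only [Nat.choose_zero_right, Nat.choose_one_right, Nat.reduceSub]
  ring

lemma nullcone_exponent_eq {V : Type*} [Fintype V] (r : V → V → ℕ) {d e : V → ℕ} (h : e ≤ d) :
    (∑ i, ((d i).choose 2 : ℤ) - ∑ i, ((e i).choose 2 : ℤ)) - eulerForm V r e (d - e) =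
      ((∑ i, (d i - e i).choose 2 + ∑ i, ∑ j, r i j * e i * (d j - e j) : ℕ) : ℤ) := by
  have hchoose (i : V) : ((d i).choose 2 : ℤ) =
      (e i).choose 2 + (d i - e i).choose 2 + e i * (d i - e i : ℕ) := by
    exact_mod_cast Nat.add_sub_cancel' (h i) ▸ Nat.add_choose_two (e i) (d i - e i)
  simp only [hchoose, eulerForm, Pi.sub_apply, Nat.cast_add, Nat.cast_mul, Nat.cast_sum,
    Finset.sum_add_distrib]
  ring

/-- If `n` satisfies the nullcone recursion, then each `n d` is (the image in `ℚ(x)` of)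
a polynomial with integer coefficients. -/
theorem nullcone_recursion_polynomiality
    (V : Type*) [Fintype V] [DecidableEq V] (r : V → V → ℕ)
    (n : (V → ℕ) → RatFunc ℚ)
    (h0 : n 0 = 1)
    (hrec : ∀ d : V → ℕ, d ≠ 0 → n d =
      -∑ e ∈ (Finset.Iic d).erase d,
        (-1 : RatFunc ℚ) ^ (∑ i, d i - ∑ i, e i) *
          (RatFunc.X : RatFunc ℚ) ^
            ((∑ i, ((d i).choose 2 : ℤ) - ∑ i, ((e i).choose 2 : ℤ)) - eulerForm V r e (d - e)) *
          (∏ i, gbinom (RatFunc.X : RatFunc ℚ) (d i) (e i)) * n e) :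
    ∀ d : V → ℕ, ∃ p : Polynomial ℤ,
      n d = Polynomial.eval₂ (Int.castRingHom (RatFunc ℚ)) RatFunc.X p := by
  set S := (Polynomial.eval₂RingHom (Int.castRingHom (RatFunc ℚ)) RatFunc.X).range
  have hXS : (RatFunc.X : RatFunc ℚ) ∈ S := ⟨Polynomial.X, Polynomial.eval₂_X _ _⟩
  suffices h : ∀ d, n d ∈ S from fun d => (h d).imp fun p hp => hp.symm
  intro d
  induction d using WellFoundedLT.induction with
  | _ d ih =>
    rcases eq_or_ne d 0 with rfl | hd
    · exact h0 ▸ S.one_mem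
    rw [hrec d hd]
    refine S.neg_mem (S.sum_mem fun e he => ?_)
    have hed : e < d := Finset.mem_Iio.1 (Finset.Iic_erase d ▸ he)
    refine S.mul_mem (S.mul_mem (S.mul_mem (S.pow_mem (S.neg_mem S.one_mem) _) ?_) ?_) (ih e hed)
    · rw [nullcone_exponent_eq r hed.le, zpow_natCast]
      exact S.pow_mem hXS _
    · exact S.prod_mem fun i _ => gbinom_mem (RatFunc.X_pow_succ_ne_one ℚ) hXS (hed.le i)
end

section
/- If μ = (μ_1,…,μ_d) ∈ Q^d is a coweight that is not balanced (i.e., some segment J of μ satisfies ∑_{i∈J} μ_i ≠ 0), then μ is not minimal: there exists μ' ∈ Q^d with R(μ') ⊇ R(μ) and |μ'| < |μ|, where |s| = ∑_i s_i^2. In particular, every minimal coweight is balanced. -/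
/-- Two indices lie in the same segment of the coweight `μ` iff they are connected by
steps in which the values agree or differ by exactly `1` (this generates the minimal
partition into subsets whose sorted values increase by `0` or `1` at each step). -/
def SameSegment {d : ℕ} (μ : Fin d → ℚ) (i j : Fin d) : Prop :=
  Relation.EqvGen (fun i j => μ i = μ j ∨ μ i - μ j = 1 ∨ μ j - μ i = 1) i j

/-- `R(s)` as a relation on indices: `(i,j) ∈ Π` (there is an arrow between the
corresponding vertices) and `s j - s i ≥ 1`. -/
def RSet {d : ℕ} {V : Type*} (vtx : Fin d → V) (arr : V → V → Prop)
    (s : Fin d → ℚ) (i j : Fin d) : Prop :=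
  arr (vtx i) (vtx j) ∧ 1 ≤ s j - s i

open Classical in
/-- A coweight that is not balanced is not minimal: there is a coweight `μ'` with
`R(μ') ⊇ R(μ)` and strictly smaller norm. In particular every minimal coweight is
balanced. -/
theorem not_balanced_not_minimal {d : ℕ} {V : Type*} (vtx : Fin d → V)
    (arr : V → V → Prop) (μ : Fin d → ℚ)
    (hnb : ¬ ∀ i : Fin d, ∑ j ∈ Finset.univ.filter (fun j => SameSegment μ i j), μ j = 0) :
    ∃ μ' : Fin d → ℚ,
      (∀ i j : Fin d, RSet vtx arr μ i j → RSet vtx arr μ' i j) ∧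
      ∑ i, (μ' i) ^ 2 < ∑ i, (μ i) ^ 2 := by
  push_neg at hnb
  obtain ⟨i₀, hS⟩ := hnb
  classical
  set J : Finset (Fin d) := Finset.univ.filter (fun j => SameSegment μ i₀ j) with hJdef
  set S : ℚ := ∑ j ∈ J, μ j with hSdef
  have hS : S ≠ 0 := hS
  -- membership transfer along the generating relation
  have hmem : ∀ j k : Fin d, j ∈ J →
      (μ j = μ k ∨ μ j - μ k = 1 ∨ μ k - μ j = 1) → k ∈ J := by
    intro j k hj hrel
    simp only [hJdef, Finset.mem_filter, Finset.mem_univ, true_and] at hj ⊢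
    exact Relation.EqvGen.trans _ _ _ hj (Relation.EqvGen.rel _ _ hrel)
  -- the minimal cross-segment gap
  set G : Finset (Fin d × Fin d) :=
    Finset.univ.filter (fun p => 1 < μ p.2 - μ p.1) with hGdef
  set ε : ℚ := if h : G.Nonempty then G.inf' h (fun p => μ p.2 - μ p.1 - 1) else 1
    with hεdef
  have hε : 0 < ε := by
    by_cases h : G.Nonempty
    · rw [hεdef, dif_pos h]
      rw [Finset.lt_inf'_iff]
      intro p hp
      have := (Finset.mem_filter.mp hp).2
      linarith
    · rw [hεdef, dif_neg h]; norm_num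
  have hεle : ∀ i j : Fin d, 1 < μ j - μ i → ε ≤ μ j - μ i - 1 := by
    intro i j h
    have hp : (i, j) ∈ G := Finset.mem_filter.mpr ⟨Finset.mem_univ _, h⟩
    have hne : G.Nonempty := ⟨(i, j), hp⟩
    rw [hεdef, dif_pos hne]
    exact Finset.inf'_le _ hp
  -- cross-segment pairs in R have gap at least 1 + ε
  have hcross : ∀ j k : Fin d, 1 ≤ μ k - μ j → ((j ∈ J ∧ k ∉ J) ∨ (j ∉ J ∧ k ∈ J)) →
      1 + ε ≤ μ k - μ j := by
    intro j k h hc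
    have hne : μ k - μ j ≠ 1 := by
      intro heq
      rcases hc with ⟨hj, hk⟩ | ⟨hj, hk⟩
      · exact hk (hmem j k hj (Or.inr (Or.inr heq)))
      · exact hj (hmem k j hk (Or.inr (Or.inl heq)))
    have h1 : 1 < μ k - μ j := lt_of_le_of_ne h (Ne.symm hne)
    have := hεle j k h1
    linarith
  -- the shift
  set N : ℚ := (d + 1 : ℚ) + |S| / ε with hNdef
  have hNpos : 0 < N := by
    have h1 : (0 : ℚ) ≤ |S| / ε := div_nonneg (abs_nonneg _) hε.le
    have h2 : (0 : ℚ) ≤ d := Nat.cast_nonneg d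
    rw [hNdef]; linarith
  set t : ℚ := S / N with htdef
  have htN : t * N = S := div_mul_cancel₀ S (ne_of_gt hNpos)
  have ht0 : t ≠ 0 := by
    intro h
    rw [h, zero_mul] at htN
    exact hS htN.symm
  have habs : |t| ≤ ε := by
    rw [htdef, abs_div, abs_of_pos hNpos, div_le_iff₀ hNpos]
    have hεS : ε * (|S| / ε) = |S| := by field_simp
    have h2 : (0 : ℚ) ≤ d := Nat.cast_nonneg d
    calc |S| = ε * (|S| / ε) := hεS.symm
    _ ≤ ε * N := by
        rw [hNdef, mul_add]
        nlinarith
  have htlo : -ε ≤ t := (abs_le.mp habs).1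
  have hthi : t ≤ ε := (abs_le.mp habs).2
  refine ⟨fun j => if j ∈ J then μ j - t else μ j, ?_, ?_⟩
  · rintro i j ⟨ha, hd⟩
    refine ⟨ha, ?_⟩
    by_cases hi : i ∈ J <;> by_cases hj : j ∈ J <;> simp only [hi, hj, if_pos, if_neg,
      if_true, if_false]
    · linarith
    · have := hcross i j hd (Or.inl ⟨hi, hj⟩); linarith
    · have := hcross i j hd (Or.inr ⟨hi, hj⟩); linarith
    · linarith
  · have key : ∀ i : Fin d, (if i ∈ J then μ i - t else μ i) ^ 2
        = μ i ^ 2 + (if i ∈ J then -2 * t * μ i + t ^ 2 else 0) := by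
      intro i; split_ifs <;> ring
    have hsum : ∑ i, (if i ∈ J then μ i - t else μ i) ^ 2
        = ∑ i, μ i ^ 2 + (-2 * t * S + t ^ 2 * J.card) := by
      simp only [key]
      rw [Finset.sum_add_distrib, Finset.sum_ite_mem, Finset.univ_inter,
        Finset.sum_add_distrib, Finset.sum_const, ← Finset.mul_sum, ← hSdef]
      ring
    rw [hsum]
    have hc : (J.card : ℚ) ≤ d := by
      exact_mod_cast (Finset.card_le_univ J).trans_eq (Fintype.card_fin d)
    have hcN : (J.card : ℚ) < 2 * N := by
      have h1 : (0 : ℚ) ≤ |S| / ε := div_nonneg (abs_nonneg _) hε.le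
      rw [hNdef]; linarith
    have hneg : -2 * t * S + t ^ 2 * J.card < 0 := by
      have heq : -2 * t * S + t ^ 2 * J.card = t ^ 2 * ((J.card : ℚ) - 2 * N) := by
        rw [← htN]; ring
      rw [heq]
      have ht2 : 0 < t ^ 2 := lt_of_le_of_ne (sq_nonneg t) (Ne.symm (pow_ne_zero 2 ht0))
      have : ((J.card : ℚ) - 2 * N) < 0 := by linarith
      exact mul_neg_of_pos_of_neg ht2 this
    linarith
end
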